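/- Let H be a Hadamard matrix of order n ≥ 3. Then the number Z(3,H) of 3 × 3 submatrices of H (over all choices of 3 rows and 3 columns) with determinant zero equals n²·(n-1)·(n-2)·(n-4)·(5n-4)/288. -/

import Mathlib

/-!
Every `3 × 3` matrix with entries `±1` has determinant `0` or `±4`, so `16` times the number of
nonsingular `3 × 3` submatrices of `H` is the sum of the squared `3 × 3` minors. Fixing three
rows, the Cauchy–Binet formula applied to the `3 × n` matrix `A` they form gives
`∑ (3 × 3 minors of A)² = det (A Aᵀ) = n³`. Hence the sum of all squared minors is
`C(n,3) n³`, and `Z(3,H) = C(n,3)² - C(n,3) n³ / 16`.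
-/

open Matrix Finset Equiv Function

theorem Nat.cast_choose_three {K : Type*} [Field K] [CharZero K] (a : ℕ) :
    (a.choose 3 : K) = a * (a - 1) * (a - 2) / 6 := by
  rw [cast_choose_eq_descPochhammer_div]
  simp [descPochhammer_succ_right, factorial]

theorem det_eq_zero_or_sq_eq_sixteen_of_entries_pm_one (M : Matrix (Fin 3) (Fin 3) ℤ)
    (hM : ∀ i j, M i j = 1 ∨ M i j = -1) : M.det = 0 ∨ M.det ^ 2 = 16 := by
  rw [det_fin_three]
  rcases hM 0 0 with h₀ | h₀ <;> rcases hM 0 1 with h₁ | h₁ <;> rcases hM 0 2 with h₂ | h₂ <;>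
    rcases hM 1 0 with h₃ | h₃ <;> rcases hM 1 1 with h₄ | h₄ <;> rcases hM 1 2 with h₅ | h₅ <;>
    rcases hM 2 0 with h₆ | h₆ <;> rcases hM 2 1 with h₇ | h₇ <;> rcases hM 2 2 with h₈ | h₈ <;>
    rw [h₀, h₁, h₂, h₃, h₄, h₅, h₆, h₇, h₈] <;> decide

section StrictMono

variable {ι : Type*} [Fintype ι] [LinearOrder ι] {k : ℕ}

theorem card_strictMono_fin :
    Fintype.card {s : Fin k → ι // StrictMono s} = (Fintype.card ι).choose k := by
  let image : {s : Fin k → ι // StrictMono s} → {t : Finset ι // #t = k} := fun s ↦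
    ⟨univ.image s.1, by rw [card_image_of_injective _ s.2.injective, card_univ, Fintype.card_fin]⟩
  have himage : Bijective image := by
    refine ⟨fun s s' h ↦ Subtype.ext ((s.2.range_inj s'.2).mp ?_), fun t ↦ ?_⟩
    · simpa [image, ← coe_inj] using congrArg (fun t ↦ (t.1 : Set ι)) h
    · exact ⟨⟨t.1.orderEmbOfFin t.2, (t.1.orderEmbOfFin t.2).strictMono⟩,
        Subtype.ext (by simp [image])⟩
  rw [Fintype.card_congr (Equiv.ofBijective image himage), Fintype.card_finset_len]

/-- Every injective `g : Fin k → ι` is uniquely `s ∘ σ` with `s` strictly monotone and `σ` a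
permutation; `s ∘ σ` is found by sorting `g`. -/
theorem sum_eq_sum_strictMono_sum_perm {M : Type*} [AddCommMonoid M] (F : (Fin k → ι) → M)
    (hF : ∀ g, ¬ Injective g → F g = 0) :
    ∑ g, F g = ∑ s : {s : Fin k → ι // StrictMono s}, ∑ σ : Perm (Fin k), F (s.1 ∘ σ) := by
  rw [← sum_filter_of_ne fun g _ hg ↦ not_imp_comm.mp (hF g) hg, ← Fintype.sum_prod_type']
  symm
  refine sum_bij (fun p _ ↦ p.1.1 ∘ p.2) (fun p _ ↦ ?_) (fun p _ q _ hpq ↦ ?_) (fun g hg ↦ ?_)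
    (fun _ _ ↦ rfl)
  · exact (mem_filter_univ _).mpr (p.1.2.injective.comp p.2.injective)
  · have hs : p.1 = q.1 := by
      have hrange := congrArg Set.range hpq
      rw [p.2.surjective.range_comp, q.2.surjective.range_comp] at hrange
      exact Subtype.ext ((p.1.2.range_inj q.1.2).mp hrange)
    have hσ : p.2 = q.2 := by
      ext i
      refine congrArg Fin.val (q.1.2.injective ?_)
      simpa [hs] using congrFun hpq i
    exact Prod.ext hs hσ
  · have hg := (mem_filter_univ _).mp hg
    refine ⟨(⟨g ∘ Tuple.sort g, (Tuple.monotone_sort g).strictMono_of_injective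
      (hg.comp (Tuple.sort g).injective)⟩, (Tuple.sort g)⁻¹), mem_univ _, ?_⟩
    ext i
    simp

end StrictMono

section CauchyBinet

variable {R : Type*} [CommRing R] {ι : Type*} [Fintype ι] {k : ℕ}

theorem det_mul_eq_sum_det_submatrix_mul_prod (A : Matrix (Fin k) ι R)
    (B : Matrix ι (Fin k) R) :
    (A * B).det = ∑ g : Fin k → ι, (A.submatrix id g).det * ∏ i, B (g i) i := by
  simp only [det_apply', mul_apply, prod_univ_sum, mul_sum, Fintype.piFinset_univ, sum_mul,
    prod_mul_distrib, submatrix_apply, id]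
  rw [Finset.sum_comm]
  simp only [mul_assoc]

variable [LinearOrder ι]

theorem det_mul_eq_sum_strictMono (A : Matrix (Fin k) ι R) (B : Matrix ι (Fin k) R) :
    (A * B).det = ∑ s : {s : Fin k → ι // StrictMono s},
      (A.submatrix id s.1).det * (B.submatrix s.1 id).det := by
  rw [det_mul_eq_sum_det_submatrix_mul_prod, sum_eq_sum_strictMono_sum_perm]
  · refine sum_congr rfl fun s _ ↦ ?_
    have hperm (σ : Perm (Fin k)) :
        A.submatrix id (s.1 ∘ σ) = (A.submatrix id s.1).submatrix id σ := rfl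
    rw [det_apply' (B.submatrix s.1 id), mul_sum]
    refine sum_congr rfl fun σ _ ↦ ?_
    rw [hperm, det_permute']
    simp only [submatrix_apply, Function.comp_apply, id]
    ring
  · intro g hg
    obtain ⟨i, j, hij, hne⟩ := not_injective_iff.mp hg
    rw [det_zero_of_column_eq hne fun r ↦ by simp [hij], zero_mul]

theorem sum_det_submatrix_sq_of_mul_transpose_eq_smul_one {κ : Type*} [DecidableEq κ]
    (H : Matrix κ ι R) (c : R) (hH : H * Hᵀ = c • 1) {f : Fin k → κ} (hf : Injective f) :
    ∑ s : {s : Fin k → ι // StrictMono s}, (H.submatrix f s.1).det ^ 2 = c ^ k := by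
  have hrows : H.submatrix f id * (H.submatrix f id)ᵀ = c • 1 := by
    rw [transpose_submatrix, ← submatrix_mul _ _ _ _ _ bijective_id, hH]
    ext i j
    simp [one_apply, hf.eq_iff]
  calc ∑ s : {s : Fin k → ι // StrictMono s}, (H.submatrix f s.1).det ^ 2
      = (H.submatrix f id * (H.submatrix f id)ᵀ).det := by
        rw [det_mul_eq_sum_strictMono]
        refine sum_congr rfl fun s _ ↦ ?_
        rw [sq]
        nth_rw 2 [← det_transpose]
        rfl
    _ = c ^ k := by rw [hrows, det_smul, det_one, Fintype.card_fin, mul_one]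

end CauchyBinet

theorem sixteen_mul_card_nonsingular_submatrix_fin_three {n : ℕ} (H : Matrix (Fin n) (Fin n) ℤ)
    (hH1 : ∀ i j, H i j = 1 ∨ H i j = -1) (hH : H * Hᵀ = (n : ℤ) • 1) :
    16 * #{p : {f : Fin 3 → Fin n // StrictMono f} × {g : Fin 3 → Fin n // StrictMono g} |
        (H.submatrix p.1.1 p.2.1).det ≠ 0} = n.choose 3 * n ^ 3 := by
  zify
  calc 16 * (#{p : {f : Fin 3 → Fin n // StrictMono f} × {g : Fin 3 → Fin n // StrictMono g} |
        (H.submatrix p.1.1 p.2.1).det ≠ 0} : ℤ)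
      = ∑ p : {f : Fin 3 → Fin n // StrictMono f} × {g : Fin 3 → Fin n // StrictMono g},
          (H.submatrix p.1.1 p.2.1).det ^ 2 := by
        rw [natCast_card_filter, mul_sum]
        refine sum_congr rfl fun p _ ↦ ?_
        rcases det_eq_zero_or_sq_eq_sixteen_of_entries_pm_one (H.submatrix p.1.1 p.2.1)
          (fun i j ↦ hH1 _ _) with h | h
        · simp [h]
        · have hne : (H.submatrix p.1.1 p.2.1).det ≠ 0 := fun h0 ↦ by simp [h0] at h
          simp [h, hne]
    _ = ∑ f : {f : Fin 3 → Fin n // StrictMono f}, (n : ℤ) ^ 3 := by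
        simp only [Fintype.sum_prod_type]
        exact sum_congr rfl fun f _ ↦
          sum_det_submatrix_sq_of_mul_transpose_eq_smul_one H _ hH f.2.injective
    _ = n.choose 3 * n ^ 3 := by simp [card_strictMono_fin]

theorem zero_minors_order_three_hadamard_general (n : ℕ)
    (H : Matrix (Fin n) (Fin n) ℤ) (hH1 : ∀ i j, H i j = 1 ∨ H i j = -1)
    (hH : H * Hᵀ = (n : ℤ) • (1 : Matrix (Fin n) (Fin n) ℤ)) :
    ((Finset.univ.filter
        (fun p : {f : Fin 3 → Fin n // StrictMono f} × {g : Fin 3 → Fin n // StrictMono g} =>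
          (H.submatrix p.1.1 p.2.1).det = 0)).card : ℚ) =
      (n : ℚ) ^ 2 * ((n : ℚ) - 1) * ((n : ℚ) - 2) * ((n : ℚ) - 4) *
        (5 * (n : ℚ) - 4) / 288 := by
  have hsplit := card_filter_add_card_filter_not (s := univ)
    (fun p : {f : Fin 3 → Fin n // StrictMono f} × {g : Fin 3 → Fin n // StrictMono g} =>
      (H.submatrix p.1.1 p.2.1).det = 0)
  rw [card_univ, Fintype.card_prod, card_strictMono_fin, Fintype.card_fin] at hsplit
  have hnonsingular := sixteen_mul_card_nonsingular_submatrix_fin_three H hH1 hH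
  replace hsplit := congrArg (Nat.cast : ℕ → ℚ) hsplit
  replace hnonsingular := congrArg (Nat.cast : ℕ → ℚ) hnonsingular
  push_cast [Nat.cast_choose_three] at hsplit hnonsingular
  linear_combination hsplit - hnonsingular / 16

/-- For a Hadamard matrix `H` of order `n ≥ 3`, the number `Z(3,H)` of `3 × 3`
submatrices with zero determinant (over all pairs of strictly monotone index
maps `Fin 3 → Fin n`) equals `n^2 (n-1) (n-2) (n-4) (5n-4) / 288`. -/
theorem zero_minors_order_three_hadamard (n : ℕ) (hn : 3 ≤ n)
    (H : Matrix (Fin n) (Fin n) ℤ) (hH1 : ∀ i j, H i j = 1 ∨ H i j = -1)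
    (hH : H * Hᵀ = (n : ℤ) • (1 : Matrix (Fin n) (Fin n) ℤ)) :
    ((Finset.univ.filter
        (fun p : {f : Fin 3 → Fin n // StrictMono f} × {g : Fin 3 → Fin n // StrictMono g} =>
          (H.submatrix p.1.1 p.2.1).det = 0)).card : ℚ) =
      (n : ℚ) ^ 2 * ((n : ℚ) - 1) * ((n : ℚ) - 2) * ((n : ℚ) - 4) *
        (5 * (n : ℚ) - 4) / 288 :=
  zero_minors_order_three_hadamard_general n H hH1 hH
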